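/- Let {A(t)}_{t≥0} be row-stochastic nonnegative M×M matrices satisfying: (1) all diagonal entries positive; (2) [A(t)]_{ij} > 0 iff [A(t)]_{ji} > 0; (3) there is δ > 0 lower-bounding every positive entry of every A(t). Then for any initial vector X(0) ∈ R^M, the sequence X(t+1) = A(t) X(t) converges as t → ∞. -/

import Mathlib

/-!
The minimum `m t = min_i X t i` is nondecreasing, since each step averages, with some limit `m*`.
Fix `ε > 0` and the levels `θ s = m* + (2/δ)^s ε`. Once `m t > m* - ε`, an agent with a positive
link to an agent at or above `θ (s + 1)` is lifted to at least `θ s` in one step. For each `s`, the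
least number of agents below `θ s` that recurs infinitely often is monotone in `s` and bounded by
the number of agents, so it stalls between two levels `r < r + 1 ≤ n`; from then on the set `W`
of agents below `θ (r + 1)` is closed under every `A t` and stays below `θ n`. If `W` is every
agent, all agents converge to `m*`. Otherwise `W` and, by symmetry of the supports, its complement
are eventually closed proper subsystems, and we conclude by induction on the number of agents.
-/

open Filter Topology Finset Matrix

section Counting

lemma exists_eventually_le_and_frequently_eq {α : Type*} {l : Filter α} [l.NeBot] {f : α → ℕ}
    {n : ℕ} (hf : ∀ a, f a ≤ n) : ∃ c, (∀ᶠ a in l, c ≤ f a) ∧ ∃ᶠ a in l, f a = c := by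
  classical
  set c := Nat.findGreatest (fun c => ∀ᶠ a in l, c ≤ f a) n
  have hc : ∀ᶠ a in l, c ≤ f a :=
    Nat.findGreatest_spec (P := fun c => ∀ᶠ a in l, c ≤ f a) n.zero_le (by simp)
  have hc' : ¬∀ᶠ a in l, c + 1 ≤ f a := by
    intro h
    rcases le_or_gt (c + 1) n with hn | hn
    · exact Nat.findGreatest_is_greatest c.lt_succ_self hn h
    · obtain ⟨a, ha⟩ := h.exists
      exact absurd (hf a) (by omega)
  refine ⟨c, hc, ((not_eventually.1 hc').and_eventually hc).mono fun a ha => ?_⟩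
  omega

lemma Nat.exists_eq_succ_of_monotone {f : ℕ → ℕ} (hf : Monotone f) {n : ℕ}
    (hn : f n < f 0 + n) : ∃ r < n, f r = f (r + 1) := by
  by_contra! h
  have hgrow : ∀ k ≤ n, f 0 + k ≤ f k := by
    intro k hk
    induction k with
    | zero => rfl
    | succ k ih =>
      have := (hf (Nat.le_add_right k 1)).lt_of_ne (h k (by omega))
      have := ih (by omega)
      omega
  exact (hgrow n le_rfl).not_gt hn

/-- `c s`, the least cardinality of `Q s t` recurring infinitely often, is monotone in `s` by
`hsub` and lies between `1` and `card ι`, so it stalls at some level `r`. -/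
lemma exists_level_frequently_card_le {ι : Type*} [Fintype ι] (Q : ℕ → ℕ → Finset ι)
    (hne : ∀ s t, (Q s t).Nonempty) (hsub : ∀ᶠ t in atTop, ∀ s, Q s (t + 1) ⊆ Q (s + 1) t) :
    ∃ r < Fintype.card ι, ∃ᶠ t₀ in atTop, ∀ t ≥ t₀, #(Q (r + 1) t₀) ≤ #(Q r t) := by
  choose c hc_ev hc_freq using fun s =>
    exists_eventually_le_and_frequently_eq (l := atTop) fun t => card_le_univ (Q s t)
  have hmono : Monotone c := monotone_nat_of_le_succ fun s => by
    obtain ⟨t, ht, hle, hQ⟩ := ((hc_freq (s + 1)).and_eventually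
      (((tendsto_add_atTop_nat 1).eventually (hc_ev s)).and hsub)).exists
    calc c s ≤ #(Q s (t + 1)) := hle
      _ ≤ #(Q (s + 1) t) := card_le_card (hQ s)
      _ = c (s + 1) := ht
  have hbound : c (Fintype.card ι) < c 0 + Fintype.card ι := by
    obtain ⟨t, ht⟩ := (hc_freq 0).exists
    obtain ⟨t', ht'⟩ := (hc_freq (Fintype.card ι)).exists
    have := (hne 0 t).card_pos
    have := card_le_univ (Q (Fintype.card ι) t')
    omega
  obtain ⟨r, hr, hcr⟩ := Nat.exists_eq_succ_of_monotone hmono hbound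
  refine ⟨r, hr, ((hc_freq (r + 1)).and_eventually
    (eventually_forall_ge_atTop.2 (hc_ev r))).mono ?_⟩
  rintro t₀ ⟨ht₀, hge⟩ t ht
  rw [ht₀, ← hcr]
  exact hge t ht

end Counting

namespace Matrix

variable {ι : Type*} [Fintype ι] {P : Matrix ι ι ℝ} {x : ι → ℝ} {i : ι} {c : ℝ}

def IsAbsorbing (P : Matrix ι ι ℝ) (S : Finset ι) : Prop :=
  ∀ i ∈ S, ∀ j ∉ S, P i j = 0

lemma IsAbsorbing.submatrix_mulVec {S : Finset ι} (hS : P.IsAbsorbing S) (x : ι → ℝ) (i : S) :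
    (P.submatrix ((↑) : S → ι) (↑) *ᵥ fun j : S => x j) i = (P *ᵥ x) i := by
  simp only [mulVec, dotProduct, submatrix_apply]
  rw [sum_coe_sort S (fun j => P i j * x j)]
  exact sum_subset (subset_univ S) fun j _ hj => by rw [hS i i.2 j hj, zero_mul]

variable [DecidableEq ι]

lemma mulVec_apply_sub_eq_sum (hP : P ∈ rowStochastic ℝ ι) (i : ι) (c : ℝ) :
    (P *ᵥ x) i - c = ∑ j, P i j * (x j - c) := by
  simp only [mulVec, dotProduct, mul_sub, sum_sub_distrib, ← sum_mul,
    sum_row_of_mem_rowStochastic hP, one_mul]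

lemma le_mulVec_apply_of_forall_pos (hP : P ∈ rowStochastic ℝ ι)
    (h : ∀ j, 0 < P i j → c ≤ x j) : c ≤ (P *ᵥ x) i := by
  rw [← sub_nonneg, mulVec_apply_sub_eq_sum hP]
  refine sum_nonneg fun j _ => ?_
  rcases (nonneg_of_mem_rowStochastic hP (i := i) (j := j)).eq_or_lt with h0 | hpos
  · simp [← h0]
  · exact mul_nonneg hpos.le (sub_nonneg.2 (h j hpos))

lemma add_mul_sub_le_mulVec_apply (hP : P ∈ rowStochastic ℝ ι) (hc : ∀ j, c ≤ x j) (j : ι) :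
    c + P i j * (x j - c) ≤ (P *ᵥ x) i := by
  rw [← le_sub_iff_add_le', mulVec_apply_sub_eq_sum hP]
  exact single_le_sum (f := fun j => P i j * (x j - c))
    (fun k _ => mul_nonneg (nonneg_of_mem_rowStochastic hP) (sub_nonneg.2 (hc k))) (mem_univ j)

lemma mulVec_apply_le_of_forall_pos (hP : P ∈ rowStochastic ℝ ι)
    (h : ∀ j, 0 < P i j → x j ≤ c) : (P *ᵥ x) i ≤ c := by
  simpa [mulVec_neg] using le_mulVec_apply_of_forall_pos (x := -x) (c := -c) hP
    fun j hj => neg_le_neg (h j hj)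

lemma IsAbsorbing.compl {S : Finset ι} (hnonneg : ∀ i j, 0 ≤ P i j)
    (hcomm : ∀ i j, 0 < P i j ↔ 0 < P j i) (hS : P.IsAbsorbing S) : P.IsAbsorbing Sᶜ :=
  fun i hi j hj => ((hnonneg i j).eq_of_not_lt fun hpos =>
    ((hcomm i j).1 hpos).ne' (hS j (by simpa using hj) i (mem_compl.1 hi))).symm

lemma IsAbsorbing.submatrix_mem_rowStochastic {S : Finset ι} (hP : P ∈ rowStochastic ℝ ι)
    (hS : P.IsAbsorbing S) : P.submatrix ((↑) : S → ι) (↑) ∈ rowStochastic ℝ S :=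
  mem_rowStochastic.2 ⟨fun _ _ => nonneg_of_mem_rowStochastic hP, funext fun i =>
    (hS.submatrix_mulVec 1 i).trans (by rw [one_vecMul_of_mem_rowStochastic hP]; rfl)⟩

end Matrix

section Orbit

variable {ι : Type*} [Fintype ι] [DecidableEq ι] {A : ℕ → Matrix ι ι ℝ} {X : ℕ → ι → ℝ}

lemma orbit_le_iSup (hA : ∀ t, A t ∈ rowStochastic ℝ ι) (hX : ∀ t, X (t + 1) = A t *ᵥ X t)
    (t : ℕ) (i : ι) : X t i ≤ ⨆ j, X 0 j := by
  induction t generalizing i with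
  | zero => exact le_ciSup (Finite.bddAbove_range _) i
  | succ t ih =>
    rw [hX]
    exact mulVec_apply_le_of_forall_pos (hA t) fun j _ => ih j

variable [Nonempty ι]

lemma monotone_iInf_orbit (hA : ∀ t, A t ∈ rowStochastic ℝ ι)
    (hX : ∀ t, X (t + 1) = A t *ᵥ X t) : Monotone fun t => ⨅ i, X t i :=
  monotone_nat_of_le_succ fun t => le_ciInf fun _ => hX t ▸
    le_mulVec_apply_of_forall_pos (hA t) fun j _ => ciInf_le (Finite.bddBelow_range _) j

lemma tendsto_iInf_orbit (hA : ∀ t, A t ∈ rowStochastic ℝ ι)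
    (hX : ∀ t, X (t + 1) = A t *ᵥ X t) :
    Tendsto (fun t => ⨅ i, X t i) atTop (𝓝 (⨆ t, ⨅ i, X t i)) := by
  refine tendsto_atTop_ciSup (monotone_iInf_orbit hA hX) ⟨⨆ j, X 0 j, ?_⟩
  rintro _ ⟨t, rfl⟩
  exact ciInf_le_of_le (Finite.bddBelow_range _) (Classical.arbitrary ι)
    (orbit_le_iSup hA hX t _)

end Orbit

/-- Conditions (1)–(3) of Lorenz's stabilization theorem, `δ` being the uniform lower bound
of the positive entries. -/
structure IsLorenzChain {ι : Type*} [Fintype ι] [DecidableEq ι] (A : ℕ → Matrix ι ι ℝ) (δ : ℝ) :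
    Prop where
  stochastic : ∀ t, A t ∈ rowStochastic ℝ ι
  diag_pos : ∀ t i, 0 < A t i i
  pos_comm : ∀ t i j, 0 < A t i j ↔ 0 < A t j i
  δ_pos : 0 < δ
  δ_le_of_pos : ∀ t i j, 0 < A t i j → δ ≤ A t i j

/-- The ratio `2/δ` of consecutive levels is what `level_le_add_mul_sub` needs: a neighbour above
level `s + 1`, weighted by at least `δ`, lifts an agent above level `s`. -/
noncomputable def level (m ε δ : ℝ) (s : ℕ) : ℝ := m + (2 / δ) ^ s * ε

noncomputable def belowLevel {ι : Type*} [Fintype ι] (x : ι → ℝ) (c : ℝ) : Finset ι := {i | x i < c}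

@[simp]
lemma mem_belowLevel {ι : Type*} [Fintype ι] {x : ι → ℝ} {c : ℝ} {i : ι} :
    i ∈ belowLevel x c ↔ x i < c := by
  simp [belowLevel]

lemma belowLevel_nonempty {ι : Type*} [Fintype ι] [Nonempty ι] {x : ι → ℝ} {c : ℝ}
    (hc : ⨅ i, x i < c) : (belowLevel x c).Nonempty := by
  obtain ⟨i, hi⟩ := exists_eq_ciInf_of_finite (f := x)
  exact ⟨i, mem_belowLevel.2 (hi ▸ hc)⟩

section

variable {m ε δ : ℝ}

lemma lt_level (hδ : 0 < δ) (hε : 0 < ε) (s : ℕ) : m < level m ε δ s :=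
  lt_add_of_pos_right m (mul_pos (pow_pos (div_pos two_pos hδ) s) hε)

lemma level_mono (hδ : 0 < δ) (hδ2 : δ ≤ 2) (hε : 0 ≤ ε) : Monotone (level m ε δ) := by
  have := (one_le_div hδ).2 hδ2
  intro s s' h
  unfold level
  gcongr

lemma level_le_add_mul_sub {b : ℝ} (hδ : 0 < δ) (hδ2 : δ ≤ 2) (hb : m - ε < b) (hbm : b ≤ m)
    (s : ℕ) : level m ε δ s ≤ b + δ * (level m ε δ (s + 1) - b) := by
  unfold level
  have hκ : δ * (2 / δ) ^ (s + 1) = 2 * (2 / δ) ^ s := by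
    rw [pow_succ]; field_simp
  have hε : ε ≤ (2 / δ) ^ s * ε :=
    le_mul_of_one_le_left (by linarith) (one_le_pow₀ ((one_le_div hδ).2 hδ2))
  nlinarith

end

namespace IsLorenzChain

variable {ι : Type*} [Fintype ι] [DecidableEq ι] {A : ℕ → Matrix ι ι ℝ} {δ : ℝ}
  {X : ℕ → ι → ℝ}

lemma δ_le_one [Nonempty ι] (hA : IsLorenzChain A δ) : δ ≤ 1 :=
  let i := Classical.arbitrary ι
  (hA.δ_le_of_pos 0 i i (hA.diag_pos 0 i)).trans (le_one_of_mem_rowStochastic (hA.stochastic 0))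

lemma isAbsorbing_compl (hA : IsLorenzChain A δ) {t : ℕ} {S : Finset ι}
    (hS : (A t).IsAbsorbing S) : (A t).IsAbsorbing Sᶜ :=
  hS.compl (fun _ _ => nonneg_of_mem_rowStochastic (hA.stochastic t)) (hA.pos_comm t)

lemma restrict (hA : IsLorenzChain A δ) {S : Finset ι} (t₀ : ℕ)
    (hS : ∀ t, (A (t₀ + t)).IsAbsorbing S) :
    IsLorenzChain (fun t => (A (t₀ + t)).submatrix ((↑) : S → ι) (↑)) δ where
  stochastic t := (hS t).submatrix_mem_rowStochastic (hA.stochastic _)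
  diag_pos _ _ := hA.diag_pos _ _
  pos_comm _ _ _ := hA.pos_comm _ _ _
  δ_pos := hA.δ_pos
  δ_le_of_pos _ _ _ := hA.δ_le_of_pos _ _ _

section Levels

variable [Nonempty ι] {m ε : ℝ} {t : ℕ}

lemma level_le_of_pos (hA : IsLorenzChain A δ) (hX : ∀ t, X (t + 1) = A t *ᵥ X t)
    (hm : m - ε < ⨅ k, X t k) (hm' : ⨅ k, X t k ≤ m) {s : ℕ} {i j : ι} (hij : 0 < A t i j)
    (hj : level m ε δ (s + 1) ≤ X t j) : level m ε δ s ≤ X (t + 1) i := by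
  set b := ⨅ k, X t k
  have hb : ∀ k, b ≤ X t k := fun k => ciInf_le (Finite.bddBelow_range _) k
  have hgap : 0 ≤ level m ε δ (s + 1) - b :=
    sub_nonneg.2 (hm'.trans (lt_level hA.δ_pos (by linarith) _).le)
  calc level m ε δ s ≤ b + δ * (level m ε δ (s + 1) - b) :=
        level_le_add_mul_sub hA.δ_pos (by linarith [hA.δ_le_one]) hm hm' s
    _ ≤ b + A t i j * (X t j - b) := by
        gcongr
        exact hA.δ_le_of_pos t i j hij
    _ ≤ X (t + 1) i := hX t ▸ add_mul_sub_le_mulVec_apply (hA.stochastic t) hb j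

lemma mem_belowLevel_of_pos (hA : IsLorenzChain A δ) (hX : ∀ t, X (t + 1) = A t *ᵥ X t)
    (hm : m - ε < ⨅ k, X t k) (hm' : ⨅ k, X t k ≤ m) {s : ℕ} {i j : ι}
    (hi : i ∈ belowLevel (X (t + 1)) (level m ε δ s)) (hij : 0 < A t i j) :
    j ∈ belowLevel (X t) (level m ε δ (s + 1)) :=
  mem_belowLevel.2 <| lt_of_not_ge fun hj =>
    (mem_belowLevel.1 hi).not_ge (hA.level_le_of_pos hX hm hm' hij hj)

/-- Every agent below level `r` at time `t + 1` lies in `W` together with its neighbours; if there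
are at least `#W` such agents, no positive entry of `A t` leaves `W`, by symmetry none enters it,
and so the agents outside `W` stay above level `r + 1`. -/
lemma isAbsorbing_and_belowLevel_eq (hA : IsLorenzChain A δ)
    (hX : ∀ t, X (t + 1) = A t *ᵥ X t) (hm : m - ε < ⨅ k, X t k) (hm' : ⨅ k, X t k ≤ m)
    (hε : 0 ≤ ε) {r : ℕ} {W : Finset ι} (hW : belowLevel (X t) (level m ε δ (r + 1)) = W)
    (hcard : #W ≤ #(belowLevel (X (t + 1)) (level m ε δ r))) :
    (A t).IsAbsorbing W ∧ belowLevel (X (t + 1)) (level m ε δ (r + 1)) = W := by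
  classical
  have hsub : belowLevel (X (t + 1)) (level m ε δ r) ⊆ {i ∈ W | ∀ j, 0 < A t i j → j ∈ W} :=
    fun i hi => mem_filter.2 ⟨hW ▸ hA.mem_belowLevel_of_pos hX hm hm' hi (hA.diag_pos t i),
      fun j hij => hW ▸ hA.mem_belowLevel_of_pos hX hm hm' hi hij⟩
  have hclosed : {i ∈ W | ∀ j, 0 < A t i j → j ∈ W} = W :=
    eq_of_subset_of_card_le (filter_subset _ _) (hcard.trans (card_le_card hsub))
  have habs : (A t).IsAbsorbing W := fun i hi j hj => by
    rw [← hclosed, mem_filter] at hi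
    exact ((nonneg_of_mem_rowStochastic (hA.stochastic t)).eq_of_not_lt fun hij =>
      hj (hi.2 j hij)).symm
  have hlow : belowLevel (X (t + 1)) (level m ε δ r) = W :=
    eq_of_subset_of_card_le (hsub.trans hclosed.le) hcard
  refine ⟨habs, subset_antisymm (fun j hj => by_contra fun hjW => ?_) fun i hi => ?_⟩
  · refine (mem_belowLevel.1 hj).not_ge (hX t ▸ le_mulVec_apply_of_forall_pos (hA.stochastic t)
      fun l hjl => not_lt.1 fun hl => ?_)
    exact hjl.ne' (hA.isAbsorbing_compl habs j (mem_compl.2 hjW) l (by simpa [← hW] using hl))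
  · rw [← hlow, mem_belowLevel] at hi
    exact mem_belowLevel.2 (hi.trans_le (level_mono hA.δ_pos (by linarith [hA.δ_le_one]) hε
      r.le_succ))

end Levels

theorem exists_isAbsorbing_forall_lt [Nonempty ι] (hA : IsLorenzChain A δ)
    (hX : ∀ t, X (t + 1) = A t *ᵥ X t) {m a : ℝ}
    (hm : Tendsto (fun t => ⨅ i, X t i) atTop (𝓝 m)) (ha : m < a) :
    ∃ W : Finset ι, W.Nonempty ∧ (∀ᶠ t in atTop, (A t).IsAbsorbing W) ∧
      ∀ᶠ t in atTop, ∀ i ∈ W, X t i < a := by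
  set ε := (a - m) / (2 / δ) ^ Fintype.card ι
  have hε : 0 < ε := div_pos (sub_pos.2 ha) (pow_pos (div_pos two_pos hA.δ_pos) _)
  have hle : ∀ t, ⨅ i, X t i ≤ m := (monotone_iInf_orbit hA.stochastic hX).ge_of_tendsto hm
  have hnear : ∀ᶠ t in atTop, m - ε < ⨅ i, X t i := hm.eventually (lt_mem_nhds (by linarith))
  set Q := fun s t => belowLevel (X t) (level m ε δ s)
  have hne : ∀ s t, (Q s t).Nonempty := fun s t =>
    belowLevel_nonempty ((hle t).trans_lt (lt_level hA.δ_pos hε s))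
  obtain ⟨r, hr, hfreq⟩ := exists_level_frequently_card_le Q hne <| hnear.mono fun t ht s i hi =>
    hA.mem_belowLevel_of_pos hX ht (hle t) hi (hA.diag_pos t i)
  obtain ⟨t₀, hcard, hnear₀⟩ := (hfreq.and_eventually (eventually_forall_ge_atTop.2 hnear)).exists
  have hstep : ∀ t ≥ t₀, Q (r + 1) t = Q (r + 1) t₀ →
      (A t).IsAbsorbing (Q (r + 1) t₀) ∧ Q (r + 1) (t + 1) = Q (r + 1) t₀ := fun t ht hW =>
    hA.isAbsorbing_and_belowLevel_eq hX (hnear₀ t ht) (hle t) hε.le hW (hcard (t + 1) (by omega))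
  have hstuck : ∀ t ≥ t₀, Q (r + 1) t = Q (r + 1) t₀ := fun t ht => by
    induction t, ht using Nat.le_induction with
    | base => rfl
    | succ t ht ih => exact (hstep t ht ih).2
  refine ⟨Q (r + 1) t₀, hne _ _, eventually_atTop.2 ⟨t₀, fun t ht => (hstep t ht (hstuck t ht)).1⟩,
    eventually_atTop.2 ⟨t₀, fun t ht i hi => ?_⟩⟩
  rw [← hstuck t ht] at hi
  calc X t i < level m ε δ (r + 1) := mem_belowLevel.1 hi
    _ ≤ level m ε δ (Fintype.card ι) :=
      level_mono hA.δ_pos (by linarith [hA.δ_le_one]) hε.le hr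
    _ = a := by
      unfold level ε
      rw [mul_div_cancel₀ _ (pow_ne_zero _ (div_pos two_pos hA.δ_pos).ne')]
      ring

theorem tendsto_of_forall_isAbsorbing_eq_univ (hA : IsLorenzChain A δ)
    (hX : ∀ t, X (t + 1) = A t *ᵥ X t)
    (hirred : ∀ S : Finset ι, S.Nonempty → (∀ᶠ t in atTop, (A t).IsAbsorbing S) → S = univ)
    (i : ι) : Tendsto (fun t => X t i) atTop (𝓝 (⨆ t, ⨅ j, X t j)) := by
  have : Nonempty ι := ⟨i⟩
  have hm := tendsto_iInf_orbit hA.stochastic hX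
  refine tendsto_order.2 ⟨fun a ha => (hm.eventually (lt_mem_nhds ha)).mono fun t ht =>
    ht.trans_le (ciInf_le (Finite.bddBelow_range _) i), fun a ha => ?_⟩
  obtain ⟨W, hWne, hWabs, hlt⟩ := hA.exists_isAbsorbing_forall_lt hX hm ha
  have hW := hirred W hWne hWabs
  exact hlt.mono fun t ht => ht i (hW ▸ mem_univ i)

theorem exists_tendsto (hA : IsLorenzChain A δ) (hX : ∀ t, X (t + 1) = A t *ᵥ X t) :
    ∃ L, Tendsto X atTop (𝓝 L) := by
  induction hn : Fintype.card ι using Nat.strong_induction_on generalizing ι with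
  | _ n ih =>
  have hrestrict : ∀ S : Finset ι, #S < n → (∀ᶠ t in atTop, (A t).IsAbsorbing S) →
      ∀ i ∈ S, ∃ l, Tendsto (fun t => X t i) atTop (𝓝 l) := by
    intro S hS habs i hi
    obtain ⟨t₀, ht₀⟩ := eventually_atTop.1 habs
    have hS' : ∀ t, (A (t₀ + t)).IsAbsorbing S := fun t => ht₀ _ (Nat.le_add_right _ _)
    obtain ⟨L, hL⟩ := ih S.card hS (ι := S) (hA.restrict t₀ hS') (X := fun t j => X (t₀ + t) j)
      (fun t => funext fun j => ((hS' t).submatrix_mulVec _ j).symm ▸ by rw [← hX]; rfl)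
      (Fintype.card_coe S)
    refine ⟨L ⟨i, hi⟩, (tendsto_add_atTop_iff_nat t₀).1 ?_⟩
    simpa only [add_comm] using tendsto_pi_nhds.1 hL ⟨i, hi⟩
  by_cases hsplit : ∃ S : Finset ι, S.Nonempty ∧ S ≠ univ ∧ ∀ᶠ t in atTop, (A t).IsAbsorbing S
  · obtain ⟨S, hSne, hSuniv, habs⟩ := hsplit
    have hcoord : ∀ i, ∃ l, Tendsto (fun t => X t i) atTop (𝓝 l) := fun i => by
      by_cases hi : i ∈ S
      · exact hrestrict S (hn ▸ (card_lt_iff_ne_univ S).2 hSuniv) habs i hi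
      · exact hrestrict Sᶜ (hn ▸ (card_compl_lt_iff_nonempty S).2 hSne)
          (habs.mono fun t => hA.isAbsorbing_compl) i (mem_compl.2 hi)
    choose L hL using hcoord
    exact ⟨L, tendsto_pi_nhds.2 hL⟩
  · exact ⟨fun _ => ⨆ t, ⨅ j, X t j, tendsto_pi_nhds.2 <| hA.tendsto_of_forall_isAbsorbing_eq_univ
      hX fun S hSne habs => by_contra fun hS => hsplit ⟨S, hSne, hS, habs⟩⟩

end IsLorenzChain

theorem stmt12 (M : ℕ) (A : ℕ → Matrix (Fin M) (Fin M) ℝ)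
    (hnonneg : ∀ t i j, 0 ≤ A t i j)
    (hrow : ∀ t i, ∑ j, A t i j = 1)
    (hdiag : ∀ t i, 0 < A t i i)
    (hsymm : ∀ t i j, 0 < A t i j ↔ 0 < A t j i)
    (δ : ℝ) (hδ : 0 < δ)
    (hlb : ∀ t i j, 0 < A t i j → δ ≤ A t i j)
    (X : ℕ → Fin M → ℝ)
    (hX : ∀ t, X (t + 1) = (A t).mulVec (X t)) :
    ∃ L : Fin M → ℝ, Tendsto X atTop (𝓝 L) :=
  IsLorenzChain.exists_tendsto
    ⟨fun t => mem_rowStochastic_iff_sum.2 ⟨hnonneg t, hrow t⟩, hdiag, hsymm, hδ, hlb⟩ hX
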